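/- arXiv:1512.01152 — 2 statements merged into one kernel-verified Lean document; each statement's English description precedes it below -/
import Mathlib

section
/- Let $D_1, D_2$ be positive integers with $D_1 \mid D_2$, $D_1 > 1$, and such that every prime dividing $D_1$ divides $D_2$ and conversely. Let $S_1$ denote the subsum of the GL(3) Kloosterman sum $S(m_1, m_2, n_1, n_2; D_1, D_2)$ restricted to terms with $\gcd(B_1, D_1) = 1$. Then $S_1 = S(0, m_1; D_1) \cdot S(m_2 D_1, n_2; D_2)$, where $S(0, m; c)$ is a Ramanujan sum and $S(a, b; c)$ a classical Kloosterman sum. -/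
open Finset

/-- `e(x) = e^{2πix}`. -/
noncomputable def efn (x : ℝ) : ℂ := Complex.exp (2 * Real.pi * Complex.I * x)

/-- Classical Kloosterman sum `S(a,b;c) = ∑_{x mod c, (x,c)=1} e((ax + b x̄)/c)`. -/
noncomputable def Kl (a b : ℤ) (c : ℕ) : ℂ :=
  ∑ x ∈ Finset.range c, if Nat.gcd x c = 1 then
    efn (((a * x + b * (((x : ZMod c)⁻¹).val : ℤ) : ℤ) : ℝ) / c) else 0

def Ycoef (B C D : ℕ) : ℤ := Nat.gcdA B (Nat.gcd C D)
def Zcoef (B C D : ℕ) : ℤ := Nat.gcdB B (Nat.gcd C D) * Nat.gcdA C D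

/-- The subsum `S₁` of the GL(3) Kloosterman sum restricted to terms with `gcd(B₁,D₁)=1`. -/
noncomputable def S1sub (m1 m2 n1 n2 : ℤ) (D1 D2 : ℕ) : ℂ :=
  ∑ B1 ∈ Finset.range D1, ∑ C1 ∈ Finset.range D1,
  ∑ B2 ∈ Finset.range D2, ∑ C2 ∈ Finset.range D2,
    if Nat.gcd B1 D1 = 1 ∧
       Nat.gcd B1 (Nat.gcd C1 D1) = 1 ∧ Nat.gcd B2 (Nat.gcd C2 D2) = 1 ∧
       (D1 * D2) ∣ (D1 * C2 + B1 * B2 + D2 * C1) then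
      efn ((((m1 * B1 + n1 * (Ycoef B1 C1 D1 * D2 - Zcoef B1 C1 D1 * B2)) : ℤ) : ℝ) / D1
        + (((m2 * B2 + n2 * (Ycoef B2 C2 D2 * D1 - Zcoef B2 C2 D2 * B1)) : ℤ) : ℝ) / D2)
    else 0

/-!
Fix `B₁` prime to `D₁`, hence to `D₂`. Reducing the congruence
`D₁C₂ + B₁B₂ + D₂C₁ ≡ 0 (mod D₁D₂)` modulo `D₁` gives `D₁ ∣ B₂`, so the `n₁`-term of the
first phase vanishes, and given `(B₂, C₂)` with `D₂ ∣ D₁C₂ + B₁B₂` the congruence fixes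
`C₁ mod D₁`: the sum over `C₁` collapses to `e(m₁B₁/D₁)`. As every prime of `D₂` divides `D₁`,
hence `B₂`, the condition `gcd(B₂, C₂, D₂) = 1` makes `C₂` a unit mod `D₂`, and
`x = -C₂B̄₁ mod D₂` parametrizes the remaining pairs as `(B₂, C₂) ≡ (D₁x, -B₁x)`. Bézout
then gives `Y₂D₁ - Z₂B₁ ≡ x̄`, so the `(B₂, C₂)`-sum is `S(m₂D₁, n₂; D₂)`. Finally
`∑_{B₁} e(m₁B₁/D₁)` is `S(0, m₁; D₁)` after substituting `x ↦ x̄`.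
-/
lemma efn_add (x y : ℝ) : efn (x + y) = efn x * efn y := by
  simp only [efn, Complex.ofReal_add, mul_add, Complex.exp_add]

lemma efn_intCast (n : ℤ) : efn n = 1 := by
  simpa [efn, mul_comm] using Complex.exp_int_mul_two_pi_mul_I n

lemma efn_intCast_div_congr {c : ℕ} {a b : ℤ} (h : (a : ZMod c) = b) :
    efn (a / c) = efn (b / c) := by
  rcases eq_or_ne c 0 with rfl | hc
  · simp
  obtain ⟨k, hk⟩ := (ZMod.intCast_eq_intCast_iff_dvd_sub a b c).mp h
  have hb : (b : ℝ) / c = a / c + k := by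
    field_simp
    exact_mod_cast (by linear_combination hk : b = a + c * k)
  rw [hb, efn_add, efn_intCast, mul_one]

lemma Ycoef_mul_add_Zcoef_mul {B C D : ℕ} (h : B.gcd (C.gcd D) = 1) :
    (Ycoef B C D : ZMod D) * B + (Zcoef B C D : ZMod D) * C = 1 := by
  have hB := congrArg (Int.cast : ℤ → ZMod D) (Nat.gcd_eq_gcd_ab B (C.gcd D))
  have hC := congrArg (Int.cast : ℤ → ZMod D) (Nat.gcd_eq_gcd_ab C D)
  rw [h] at hB
  push_cast [ZMod.natCast_self] at hB hC
  simp only [Ycoef, Zcoef]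
  push_cast
  linear_combination -hB - (Nat.gcdB B (C.gcd D) : ZMod D) * hC

lemma ZMod.val_coprime_of_isUnit {n : ℕ} {a : ZMod n} (h : IsUnit a) : a.val.Coprime n := by
  simpa using ZMod.val_coe_unit_coprime h.unit

lemma Nat.Coprime.of_forall_prime_dvd {a D1 D2 : ℕ} (h : a.Coprime D1)
    (hrad : ∀ p, p.Prime → p ∣ D2 → p ∣ D1) : a.Coprime D2 :=
  Nat.coprime_of_dvd fun p hp hpa hpD2 =>
    hp.one_lt.ne' (Nat.eq_one_of_dvd_coprimes h hpa (hrad p hp hpD2))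

lemma Kl_zero_left (m : ℤ) (c : ℕ) :
    Kl 0 m c = ∑ x ∈ range c, if x.gcd c = 1 then efn ((m * x : ℤ) / c) else 0 := by
  have hinv : ∀ x ∈ (range c).filter (·.gcd c = 1),
      ((x : ZMod c)⁻¹).val ∈ (range c).filter (·.gcd c = 1) ∧
        (((x : ZMod c)⁻¹.val : ZMod c))⁻¹.val = x := by
    intro x hx
    rw [mem_filter, mem_range] at hx
    have : NeZero c := ⟨by omega⟩
    have hu : IsUnit (x : ZMod c) := (ZMod.isUnit_iff_coprime x c).mpr hx.2
    refine ⟨mem_filter.mpr ⟨mem_range.mpr (ZMod.val_lt _), ?_⟩, ?_⟩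
    · exact ZMod.val_coprime_of_isUnit (IsUnit.of_mul_eq_one_right _ (ZMod.mul_inv_of_unit _ hu))
    · rw [ZMod.natCast_zmod_val, ZMod.inv_eq_of_mul_eq_one _ _ _ (ZMod.inv_mul_of_unit _ hu),
        ZMod.val_cast_of_lt hx.1]
  rw [Kl, ← sum_filter, ← sum_filter]
  refine sum_nbij' (fun x => ((x : ZMod c)⁻¹).val) (fun x => ((x : ZMod c)⁻¹).val)
    (fun x hx => (hinv x hx).1) (fun x hx => (hinv x hx).1)
    (fun x hx => (hinv x hx).2) (fun x hx => (hinv x hx).2) fun x _ => ?_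
  simp

lemma mul_dvd_add_mul_iff {D1 D2 N C : ℕ} (hD2 : D2 ≠ 0) (hC : C < D1) :
    D1 * D2 ∣ N + D2 * C ↔ D2 ∣ N ∧ C = (-((N / D2 : ℕ) : ZMod D1)).val := by
  have : NeZero D1 := ⟨by omega⟩
  have key : ∀ q, D1 * D2 ∣ D2 * q + D2 * C ↔ (C : ZMod D1) = -q := fun q => by
    rw [← mul_add, mul_comm D1, Nat.mul_dvd_mul_iff_left (Nat.pos_of_ne_zero hD2),
      ← ZMod.natCast_eq_zero_iff, eq_neg_iff_add_eq_zero, add_comm]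
    push_cast; rfl
  constructor
  · intro h
    obtain ⟨q, rfl⟩ : D2 ∣ N :=
      (Nat.dvd_add_left (dvd_mul_right D2 C)).mp ((dvd_mul_left D2 D1).trans h)
    rw [Nat.mul_div_cancel_left q (Nat.pos_of_ne_zero hD2), ← (key q).mp h,
      ZMod.val_cast_of_lt hC]
    exact ⟨dvd_mul_right _ _, rfl⟩
  · rintro ⟨⟨q, rfl⟩, hC⟩
    rw [Nat.mul_div_cancel_left q (Nat.pos_of_ne_zero hD2)] at hC
    rw [key, hC, ZMod.natCast_zmod_val]

lemma sum_C1_eq_efn_mul {D1 D2 B1 B2 C2 : ℕ} (hD2 : D2 ≠ 0) (hdvd : D1 ∣ D2)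
    (hB1 : B1.Coprime D1) (m1 n1 : ℤ) (g : Prop) [Decidable g] (y : ℝ) :
    ∑ C1 ∈ range D1, (if B1.gcd D1 = 1 ∧ B1.gcd (C1.gcd D1) = 1 ∧ g ∧
        D1 * D2 ∣ D1 * C2 + B1 * B2 + D2 * C1 then
      efn ((((m1 * B1 + n1 * (Ycoef B1 C1 D1 * D2 - Zcoef B1 C1 D1 * B2)) : ℤ) : ℝ) / D1 + y)
      else 0)
      = efn ((m1 * B1 : ℤ) / D1) * if D2 ∣ D1 * C2 + B1 * B2 ∧ g then efn y else 0 := by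
  have : NeZero D1 := ⟨ne_zero_of_dvd_ne_zero hD2 hdvd⟩
  set c := (-(((D1 * C2 + B1 * B2) / D2 : ℕ) : ZMod D1)).val
  have hc : c < D1 := ZMod.val_lt _
  have hiff := mul_dvd_add_mul_iff (N := D1 * C2 + B1 * B2) hD2 hc
  rw [sum_eq_single_of_mem c (mem_range.mpr hc)]
  · by_cases hN : D2 ∣ D1 * C2 + B1 * B2 ∧ g
    · have hgcd : B1.gcd (c.gcd D1) = 1 :=
        Nat.Coprime.coprime_dvd_right (Nat.gcd_dvd_right _ _) hB1
      have hB2 : D1 ∣ B2 := Nat.Coprime.dvd_of_dvd_mul_left hB1.symm <|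
        (Nat.dvd_add_right (dvd_mul_right _ _)).mp (hdvd.trans hN.1)
      rw [if_pos ⟨hB1, hgcd, hN.2, hiff.mpr ⟨hN.1, rfl⟩⟩, if_pos hN, efn_add]
      congr 1
      apply efn_intCast_div_congr
      simp [(ZMod.natCast_eq_zero_iff _ _).mpr hdvd, (ZMod.natCast_eq_zero_iff _ _).mpr hB2]
    · rw [if_neg fun h => hN ⟨(hiff.mp h.2.2.2).1, h.2.2.1⟩, if_neg hN, mul_zero]
  · intro C1 hC1 hne
    exact if_neg fun h => hne ((mul_dvd_add_mul_iff hD2 (mem_range.mp hC1)).mp h.2.2.2).2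

section Parametrization

variable {D1 D2 B1 : ℕ}

variable (D1 D2 B1) in
def solutionOfUnit (x : ℕ) : ℕ × ℕ :=
  (((D1 : ZMod D2) * x).val, (-((B1 : ZMod D2) * x)).val)

variable (D2 B1) in
def unitOfSolution (p : ℕ × ℕ) : ℕ := (-(p.2 : ZMod D2) * (B1 : ZMod D2)⁻¹).val

lemma coprime_C2_of_gcd_eq_one {B2 C2 : ℕ} (hB1 : B1.Coprime D2)
    (hrad : ∀ p, p.Prime → p ∣ D2 → p ∣ D1) (hN : D2 ∣ D1 * C2 + B1 * B2)
    (hg : B2.gcd (C2.gcd D2) = 1) : C2.Coprime D2 := by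
  refine Nat.coprime_of_dvd fun p hp hpC2 hpD2 => hp.one_lt.ne' ?_
  have hpB2 : p ∣ B2 := by
    have : p ∣ B1 * B2 := (Nat.dvd_add_right ((hrad p hp hpD2).mul_right C2)).mp (hpD2.trans hN)
    exact (hp.dvd_mul.mp this).resolve_left fun hpB1 =>
      hp.one_lt.ne' (Nat.eq_one_of_dvd_coprimes hB1 hpB1 hpD2)
  exact Nat.eq_one_of_dvd_one (hg ▸ Nat.dvd_gcd hpB2 (Nat.dvd_gcd hpC2 hpD2))

variable [NeZero D2]

lemma unitOfSolution_spec (hB1 : B1.Coprime D2) (hrad : ∀ p, p.Prime → p ∣ D2 → p ∣ D1)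
    {B2 C2 : ℕ} (hB2 : B2 < D2) (hC2 : C2 < D2) (hN : D2 ∣ D1 * C2 + B1 * B2)
    (hg : B2.gcd (C2.gcd D2) = 1) :
    (unitOfSolution D2 B1 (B2, C2)).Coprime D2 ∧
      solutionOfUnit D1 D2 B1 (unitOfSolution D2 B1 (B2, C2)) = (B2, C2) ∧
      (unitOfSolution D2 B1 (B2, C2) : ZMod D2)⁻¹ =
        Ycoef B2 C2 D2 * D1 - Zcoef B2 C2 D2 * B1 := by
  have hb : (B1 : ZMod D2) * (B1 : ZMod D2)⁻¹ = 1 := ZMod.coe_mul_inv_eq_one B1 hB1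
  have hrel : (D1 : ZMod D2) * C2 + B1 * B2 = 0 := by
    simpa using (ZMod.natCast_eq_zero_iff _ _).mpr hN
  have hx : (unitOfSolution D2 B1 (B2, C2) : ZMod D2) = -(C2 : ZMod D2) * (B1 : ZMod D2)⁻¹ :=
    ZMod.natCast_zmod_val _
  have hC2u : IsUnit (C2 : ZMod D2) :=
    (ZMod.isUnit_iff_coprime C2 D2).mpr (coprime_C2_of_gcd_eq_one hB1 hrad hN hg)
  refine ⟨ZMod.val_coprime_of_isUnit (hC2u.neg.mul (IsUnit.of_mul_eq_one_right _ hb)), ?_, ?_⟩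
  · simp only [solutionOfUnit, Prod.mk.injEq, hx]
    constructor
    · rw [show (D1 : ZMod D2) * (-C2 * (B1 : ZMod D2)⁻¹) = B2 by
        linear_combination (-(B1 : ZMod D2)⁻¹) * hrel + B2 * hb, ZMod.val_cast_of_lt hB2]
    · rw [show -((B1 : ZMod D2) * (-C2 * (B1 : ZMod D2)⁻¹)) = C2 by
        linear_combination C2 * hb, ZMod.val_cast_of_lt hC2]
  · refine ZMod.inv_eq_of_mul_eq_one _ _ _ ?_
    rw [hx]
    linear_combination (-(Ycoef B2 C2 D2 : ZMod D2) * (B1 : ZMod D2)⁻¹) * hrel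
      + ((B1 : ZMod D2) * (B1 : ZMod D2)⁻¹) * Ycoef_mul_add_Zcoef_mul hg + hb

lemma solutionOfUnit_spec (hB1 : B1.Coprime D2) {x : ℕ} (hx : x < D2) (hxD2 : x.Coprime D2) :
    D2 ∣ D1 * (solutionOfUnit D1 D2 B1 x).2 + B1 * (solutionOfUnit D1 D2 B1 x).1 ∧
      (solutionOfUnit D1 D2 B1 x).2.Coprime D2 ∧
      unitOfSolution D2 B1 (solutionOfUnit D1 D2 B1 x) = x := by
  have hb : (B1 : ZMod D2) * (B1 : ZMod D2)⁻¹ = 1 := ZMod.coe_mul_inv_eq_one B1 hB1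
  have hbx : IsUnit ((B1 : ZMod D2) * x) :=
    ((ZMod.isUnit_iff_coprime B1 D2).mpr hB1).mul ((ZMod.isUnit_iff_coprime x D2).mpr hxD2)
  simp only [solutionOfUnit, unitOfSolution, ← ZMod.natCast_eq_zero_iff]
  push_cast
  simp only [ZMod.natCast_zmod_val]
  refine ⟨by ring, ZMod.val_coprime_of_isUnit hbx.neg, ?_⟩
  rw [show -(-((B1 : ZMod D2) * x)) * (B1 : ZMod D2)⁻¹ = x by
    linear_combination (x : ZMod D2) * hb, ZMod.val_cast_of_lt hx]

lemma sum_B2_C2_eq_Kl (hB1 : B1.Coprime D2) (hrad : ∀ p, p.Prime → p ∣ D2 → p ∣ D1)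
    (m2 n2 : ℤ) :
    ∑ B2 ∈ range D2, ∑ C2 ∈ range D2,
      (if D2 ∣ D1 * C2 + B1 * B2 ∧ B2.gcd (C2.gcd D2) = 1 then
        efn ((((m2 * B2 + n2 * (Ycoef B2 C2 D2 * D1 - Zcoef B2 C2 D2 * B1)) : ℤ) : ℝ) / D2)
      else 0)
      = Kl (m2 * D1) n2 D2 := by
  rw [← sum_product', ← sum_filter, Kl, ← sum_filter]
  refine sum_nbij' (unitOfSolution D2 B1) (solutionOfUnit D1 D2 B1) ?_ ?_ ?_ ?_ ?_
  all_goals simp only [mem_filter, mem_product, mem_range, Prod.forall]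
  · rintro B2 C2 ⟨⟨hB2, hC2⟩, hN, hg⟩
    exact ⟨ZMod.val_lt _, (unitOfSolution_spec hB1 hrad hB2 hC2 hN hg).1⟩
  · rintro x ⟨hx, hxD2⟩
    obtain ⟨hN, hC2, -⟩ := solutionOfUnit_spec (D1 := D1) hB1 hx hxD2
    exact ⟨⟨ZMod.val_lt _, ZMod.val_lt _⟩, hN, by rw [hC2, Nat.gcd_one_right]⟩
  · rintro B2 C2 ⟨⟨hB2, hC2⟩, hN, hg⟩
    exact (unitOfSolution_spec hB1 hrad hB2 hC2 hN hg).2.1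
  · rintro x ⟨hx, hxD2⟩
    exact (solutionOfUnit_spec hB1 hx hxD2).2.2
  · rintro B2 C2 ⟨⟨hB2, hC2⟩, hN, hg⟩
    obtain ⟨-, hsol, hinv⟩ := unitOfSolution_spec hB1 hrad hB2 hC2 hN hg
    have hB2x := congrArg (fun p => (p.1 : ZMod D2)) hsol
    simp only [solutionOfUnit, ZMod.natCast_zmod_val] at hB2x
    apply efn_intCast_div_congr
    push_cast
    rw [ZMod.natCast_zmod_val (unitOfSolution D2 B1 (B2, C2) : ZMod D2)⁻¹, hinv, ← hB2x]
    ring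

end Parametrization

theorem stmt2_general (D1 D2 : ℕ) (hdvd : D1 ∣ D2)
    (hsame : ∀ p : ℕ, p.Prime → (p ∣ D1 ↔ p ∣ D2)) (m1 m2 n1 n2 : ℤ) :
    S1sub m1 m2 n1 n2 D1 D2 = Kl 0 m1 D1 * Kl (m2 * D1) n2 D2 := by
  rcases eq_or_ne D2 0 with rfl | hD2
  · simp [S1sub, Kl]
  have : NeZero D2 := ⟨hD2⟩
  have hrad : ∀ p, p.Prime → p ∣ D2 → p ∣ D1 := fun p hp => (hsame p hp).2
  rw [S1sub, Kl_zero_left, sum_mul]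
  refine sum_congr rfl fun B1 _ => ?_
  by_cases hB1 : B1.Coprime D1
  · rw [if_pos hB1, ← sum_B2_C2_eq_Kl (hB1.of_forall_prime_dvd hrad) hrad, mul_sum, sum_comm]
    refine sum_congr rfl fun B2 _ => ?_
    rw [mul_sum, sum_comm]
    exact sum_congr rfl fun C2 _ => sum_C1_eq_efn_mul hD2 hdvd hB1 m1 n1 _ _
  · simp [hB1]

/-- `S₁ = S(0,m₁;D₁) · S(m₂D₁,n₂;D₂)` for `1 < D₁ ∣ D₂` with the same prime divisors. -/
theorem stmt2 (D1 D2 : ℕ) (h1 : 1 < D1) (hdvd : D1 ∣ D2)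
    (hsame : ∀ p : ℕ, p.Prime → (p ∣ D1 ↔ p ∣ D2)) (m1 m2 n1 n2 : ℤ) :
    S1sub m1 m2 n1 n2 D1 D2 = Kl 0 m1 D1 * Kl (m2 * D1) n2 D2 :=
  stmt2_general D1 D2 hdvd hsame m1 m2 n1 n2
end

section
/- Let $c_1, c_2$ be coprime positive integers and $m, n$ integers. Then $S(m, n \bar{c_2}^2; c_1) \cdot S(m, n \bar{c_1}^2; c_2) = S(m, n; c_1 c_2)$, where $\bar{c_2}$ denotes an inverse of $c_2$ modulo $c_1$ and $\bar{c_1}$ an inverse of $c_1$ modulo $c_2$ (twisted multiplicativity of Kloosterman sums). -/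
open Finset

lemma efn_int (k : ℤ) : efn k = 1 := by
  simp [efn]
  rw [show (2 : ℂ) * Real.pi * Complex.I * k = k * (2 * Real.pi * Complex.I) by ring]
  exact Complex.exp_int_mul_two_pi_mul_I k

noncomputable def eZ (c : ℕ) (z : ZMod c) : ℂ := efn ((z.val : ℝ) / c)

lemma eZ_intCast (c : ℕ) [NeZero c] (k : ℤ) : eZ c (k : ZMod c) = efn ((k : ℝ) / c) := by
  have hc : (c : ℝ) ≠ 0 := Nat.cast_ne_zero.mpr (NeZero.ne c)
  have hval : (((k : ZMod c)).val : ℤ) = k % c := ZMod.val_intCast k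
  have hk : (k : ℝ) = ((k : ZMod c).val : ℝ) + c * ((k / c : ℤ) : ℝ) := by
    have h0 : (k : ℤ) = (((k : ZMod c)).val : ℤ) + c * (k / c) := by
      rw [hval]; exact (Int.emod_add_mul_ediv k c).symm
    exact_mod_cast congrArg (Int.cast : ℤ → ℝ) h0
  rw [eZ, hk]
  rw [show (((k : ZMod c).val : ℝ) + c * ((k / c : ℤ) : ℝ)) / c
      = ((k : ZMod c).val : ℝ) / c + ((k / c : ℤ) : ℝ) by field_simp]
  rw [efn_add, efn_int, mul_one]

noncomputable def Ku (a b : ℤ) (c : ℕ) [NeZero c] : ℂ :=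
  ∑ u : (ZMod c)ˣ, eZ c (a * (u : ZMod c) + b * ((u⁻¹ : (ZMod c)ˣ) : ZMod c))

lemma Kl_eq_Ku (a b : ℤ) (c : ℕ) [NeZero c] : Kl a b c = Ku a b c := by
  rw [Kl, ← Finset.sum_filter, Ku]
  refine (Finset.sum_bij (fun (u : (ZMod c)ˣ) (_ : u ∈ Finset.univ) => (u : ZMod c).val)
    ?_ ?_ ?_ ?_).symm
  · intro u _
    simp only [Finset.mem_filter, Finset.mem_range]
    exact ⟨ZMod.val_lt _, ZMod.val_coe_unit_coprime u⟩
  · intro u _ v _ h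
    have : ((u : ZMod c).val : ZMod c) = ((v : ZMod c).val : ZMod c) := by rw [h]
    rw [ZMod.natCast_val, ZMod.natCast_val, ZMod.cast_id, ZMod.cast_id] at this
    exact Units.ext this
  · intro x hx
    simp only [Finset.mem_filter, Finset.mem_range] at hx
    refine ⟨ZMod.unitOfCoprime x hx.2, Finset.mem_univ _, ?_⟩
    rw [ZMod.coe_unitOfCoprime, ZMod.val_natCast_of_lt hx.1]
  · intro u _
    have h1 : (((u : ZMod c).val : ℕ) : ZMod c) = (u : ZMod c) := by
      rw [ZMod.natCast_val, ZMod.cast_id]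
    have h2 : (((u : ZMod c).val : ℕ) : ZMod c)⁻¹ = ((u⁻¹ : (ZMod c)ˣ) : ZMod c) := by
      rw [h1, ZMod.inv_coe_unit]
    rw [h2]
    have : a * (u : ZMod c) + b * ((u⁻¹ : (ZMod c)ˣ) : ZMod c)
        = ((a * ((u : ZMod c).val : ℤ) + b * (((u⁻¹ : (ZMod c)ˣ) : ZMod c).val : ℤ) : ℤ) : ZMod c) := by
      push_cast [ZMod.natCast_val, ZMod.cast_id]
      ring
    rw [this, eZ_intCast]

lemma inv_mul_cong (c1 c2 : ℕ) [NeZero c1] (h : Nat.Coprime c2 c1) :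
    (c1 : ℤ) ∣ c2 * (((c2 : ZMod c1)⁻¹).val : ℤ) - 1 := by
  have h1 : ((c2 * (((c2 : ZMod c1)⁻¹).val : ℤ) - 1 : ℤ) : ZMod c1) = 0 := by
    push_cast [ZMod.natCast_val, ZMod.cast_id]
    rw [ZMod.coe_mul_inv_eq_one c2 h, sub_self]
  exact (ZMod.intCast_zmod_eq_zero_iff_dvd _ _).mp h1

lemma split_exists (c1 c2 : ℕ) [NeZero c1] [NeZero c2] (hcop : Nat.Coprime c1 c2) :
    ∃ t : ℤ, 1 - c2 * (((c2 : ZMod c1)⁻¹).val : ℤ) - c1 * (((c1 : ZMod c2)⁻¹).val : ℤ)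
      = c1 * c2 * t := by
  set b2 : ℤ := (((c2 : ZMod c1)⁻¹).val : ℤ)
  set b1 : ℤ := (((c1 : ZMod c2)⁻¹).val : ℤ)
  have hd1 : (c1 : ℤ) ∣ 1 - c2 * b2 - c1 * b1 := by
    obtain ⟨k, hk⟩ := inv_mul_cong c1 c2 hcop.symm
    exact ⟨-k - b1, by linarith⟩
  have hd2 : (c2 : ℤ) ∣ 1 - c2 * b2 - c1 * b1 := by
    obtain ⟨k, hk⟩ := inv_mul_cong c2 c1 hcop
    exact ⟨-k - b2, by linarith⟩
  have hco : IsCoprime (c1 : ℤ) (c2 : ℤ) := by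
    rw [Int.isCoprime_iff_gcd_eq_one, Int.gcd_natCast_natCast]
    exact hcop
  exact hco.mul_dvd hd1 hd2

lemma eZ_split (c1 c2 : ℕ) [NeZero c1] [NeZero c2] (hcop : Nat.Coprime c1 c2)
    (z : ZMod (c1 * c2)) :
    eZ (c1 * c2) z
      = eZ c1 (ZMod.castHom (dvd_mul_right c1 c2) (ZMod c1) z * (c2 : ZMod c1)⁻¹)
      * eZ c2 (ZMod.castHom (dvd_mul_left c2 c1) (ZMod c2) z * (c1 : ZMod c2)⁻¹) := by
  haveI : NeZero (c1 * c2) := ⟨Nat.mul_ne_zero (NeZero.ne c1) (NeZero.ne c2)⟩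
  set b2 : ℤ := (((c2 : ZMod c1)⁻¹).val : ℤ) with hb2
  set b1 : ℤ := (((c1 : ZMod c2)⁻¹).val : ℤ) with hb1
  set k : ℤ := (z.val : ℤ) with hk
  have hz1 : ZMod.castHom (dvd_mul_right c1 c2) (ZMod c1) z * (c2 : ZMod c1)⁻¹
      = ((k * b2 : ℤ) : ZMod c1) := by
    rw [ZMod.castHom_apply, hk, hb2]
    push_cast
    rw [ZMod.natCast_val, ZMod.natCast_val, ZMod.cast_id]
  have hz2 : ZMod.castHom (dvd_mul_left c2 c1) (ZMod c2) z * (c1 : ZMod c2)⁻¹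
      = ((k * b1 : ℤ) : ZMod c2) := by
    rw [ZMod.castHom_apply, hk, hb1]
    push_cast
    rw [ZMod.natCast_val, ZMod.natCast_val, ZMod.cast_id]
  have hzz : z = ((k : ℤ) : ZMod (c1 * c2)) := by
    rw [hk]
    push_cast [ZMod.natCast_val, ZMod.cast_id]
    rfl
  rw [hz1, hz2, eZ_intCast, eZ_intCast]
  conv_lhs => rw [hzz]
  rw [eZ_intCast]
  obtain ⟨t, ht⟩ := split_exists c1 c2 hcop
  have hc1 : (c1 : ℝ) ≠ 0 := Nat.cast_ne_zero.mpr (NeZero.ne c1)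
  have hc2 : (c2 : ℝ) ≠ 0 := Nat.cast_ne_zero.mpr (NeZero.ne c2)
  have key : (k : ℝ) / (c1 * c2 : ℕ) = (k * b2 : ℤ) / c1 + ((k * b1 : ℤ) / c2 + ((k * t : ℤ) : ℝ)) := by
    have h := congrArg (fun x : ℤ => (x : ℝ)) ht
    push_cast at h
    push_cast
    field_simp
    linear_combination (k : ℝ) * h
  rw [key, efn_add, efn_add, efn_int, mul_one]

lemma cr_fst (c1 c2 : ℕ) [NeZero c1] [NeZero c2] (hcop : Nat.Coprime c1 c2) (z : ZMod (c1 * c2)) :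
    ((ZMod.chineseRemainder hcop) z).1 = ZMod.castHom (dvd_mul_right c1 c2) (ZMod c1) z := by
  haveI : NeZero (c1 * c2) := ⟨Nat.mul_ne_zero (NeZero.ne c1) (NeZero.ne c2)⟩
  have h : (ZMod.chineseRemainder hcop) z
      = ZMod.castHom (show Nat.lcm c1 c2 ∣ c1 * c2 by simp [Nat.lcm_dvd_iff]) (ZMod c1 × ZMod c2) z := rfl
  rw [h, ZMod.castHom_apply, ZMod.castHom_apply, ← ZMod.natCast_val, ← ZMod.natCast_val, Prod.fst_natCast]

lemma cr_snd (c1 c2 : ℕ) [NeZero c1] [NeZero c2] (hcop : Nat.Coprime c1 c2) (z : ZMod (c1 * c2)) :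
    ((ZMod.chineseRemainder hcop) z).2 = ZMod.castHom (dvd_mul_left c2 c1) (ZMod c2) z := by
  haveI : NeZero (c1 * c2) := ⟨Nat.mul_ne_zero (NeZero.ne c1) (NeZero.ne c2)⟩
  have h : (ZMod.chineseRemainder hcop) z
      = ZMod.castHom (show Nat.lcm c1 c2 ∣ c1 * c2 by simp [Nat.lcm_dvd_iff]) (ZMod c1 × ZMod c2) z := rfl
  rw [h, ZMod.castHom_apply, ZMod.castHom_apply, ← ZMod.natCast_val, ← ZMod.natCast_val, Prod.snd_natCast]

/-- Twisted multiplicativity of classical Kloosterman sums: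
`S(m, n c̄₂²; c₁) S(m, n c̄₁²; c₂) = S(m, n; c₁c₂)` for coprime `c₁, c₂`. -/
theorem stmt6 (c1 c2 : ℕ) (h1 : 0 < c1) (h2 : 0 < c2) (hcop : Nat.Coprime c1 c2)
    (m n : ℤ) :
    Kl m (n * (((c2 : ZMod c1)⁻¹).val : ℤ) ^ 2) c1 *
      Kl m (n * (((c1 : ZMod c2)⁻¹).val : ℤ) ^ 2) c2 = Kl m n (c1 * c2) := by
  haveI : NeZero c1 := ⟨h1.ne'⟩
  haveI : NeZero c2 := ⟨h2.ne'⟩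
  haveI : NeZero (c1 * c2) := ⟨Nat.mul_ne_zero h1.ne' h2.ne'⟩
  rw [Kl_eq_Ku, Kl_eq_Ku, Kl_eq_Ku, Ku, Ku, Ku, Finset.sum_mul_sum, ← Finset.sum_product']
  let χ : ZMod c1 × ZMod c2 ≃+* ZMod (c1 * c2) := (ZMod.chineseRemainder hcop).symm
  let Φ : ((ZMod c1)ˣ × (ZMod c2)ˣ) ≃* (ZMod (c1 * c2))ˣ :=
    (MulEquiv.prodUnits).symm.trans (Units.mapEquiv χ.toMulEquiv)
  let v1 : (ZMod c1)ˣ := ZMod.unitOfCoprime c2 hcop.symm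
  let v2 : (ZMod c2)ˣ := ZMod.unitOfCoprime c1 hcop
  let E : ((ZMod c1)ˣ × (ZMod c2)ˣ) ≃ (ZMod (c1 * c2))ˣ :=
    (Equiv.prodCongr (Equiv.mulRight v1) (Equiv.mulRight v2)).trans Φ.toEquiv
  rw [Finset.univ_product_univ]
  refine Fintype.sum_equiv E _ _ ?_
  rintro ⟨u1, u2⟩
  -- identify the unit and its inverse
  have hΦcoe : ∀ p : (ZMod c1)ˣ × (ZMod c2)ˣ,
      ((Φ p : (ZMod (c1 * c2))ˣ) : ZMod (c1 * c2)) = χ ((p.1 : ZMod c1), (p.2 : ZMod c2)) :=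
    fun p => rfl
  have hw : ((E (u1, u2) : (ZMod (c1 * c2))ˣ) : ZMod (c1 * c2))
      = χ (((u1 * v1 : (ZMod c1)ˣ) : ZMod c1), ((u2 * v2 : (ZMod c2)ˣ) : ZMod c2)) := rfl
  have hwinv : (((E (u1, u2))⁻¹ : (ZMod (c1 * c2))ˣ) : ZMod (c1 * c2))
      = χ ((((u1 * v1)⁻¹ : (ZMod c1)ˣ) : ZMod c1), (((u2 * v2)⁻¹ : (ZMod c2)ˣ) : ZMod c2)) := by
    have : (E (u1, u2))⁻¹ = Φ ((u1 * v1)⁻¹, (u2 * v2)⁻¹) := by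
      show (Φ (u1 * v1, u2 * v2))⁻¹ = _
      rw [← map_inv]
      rfl
    rw [this, hΦcoe]
  -- projections
  have hπ1 : ∀ p : ZMod c1 × ZMod c2,
      ZMod.castHom (dvd_mul_right c1 c2) (ZMod c1) (χ p) = p.1 := by
    intro p
    rw [← cr_fst c1 c2 hcop, RingEquiv.apply_symm_apply]
  have hπ2 : ∀ p : ZMod c1 × ZMod c2,
      ZMod.castHom (dvd_mul_left c2 c1) (ZMod c2) (χ p) = p.2 := by
    intro p
    rw [← cr_snd c1 c2 hcop, RingEquiv.apply_symm_apply]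
  rw [eZ_split c1 c2 hcop]
  simp only [map_add, map_mul, map_intCast, hw, hwinv, hπ1, hπ2]
  have hu1 : ((u1 * v1 : (ZMod c1)ˣ) : ZMod c1) = (u1 : ZMod c1) * (c2 : ZMod c1) := by
    rw [Units.val_mul, ZMod.coe_unitOfCoprime]
  have hu1' : (((u1 * v1)⁻¹ : (ZMod c1)ˣ) : ZMod c1)
      = ((u1⁻¹ : (ZMod c1)ˣ) : ZMod c1) * (c2 : ZMod c1)⁻¹ := by
    rw [mul_inv, Units.val_mul, ← ZMod.inv_coe_unit, ← ZMod.inv_coe_unit, ZMod.coe_unitOfCoprime]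
  have hu2 : ((u2 * v2 : (ZMod c2)ˣ) : ZMod c2) = (u2 : ZMod c2) * (c1 : ZMod c2) := by
    rw [Units.val_mul, ZMod.coe_unitOfCoprime]
  have hu2' : (((u2 * v2)⁻¹ : (ZMod c2)ˣ) : ZMod c2)
      = ((u2⁻¹ : (ZMod c2)ˣ) : ZMod c2) * (c1 : ZMod c2)⁻¹ := by
    rw [mul_inv, Units.val_mul, ← ZMod.inv_coe_unit, ← ZMod.inv_coe_unit, ZMod.coe_unitOfCoprime]
  rw [hu1, hu1', hu2, hu2']
  have hb2 : ((n * (((c2 : ZMod c1)⁻¹).val : ℤ) ^ 2 : ℤ) : ZMod c1)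
      = (n : ZMod c1) * ((c2 : ZMod c1)⁻¹) ^ 2 := by
    push_cast [ZMod.natCast_val, ZMod.cast_id]
    rfl
  have hb1 : ((n * (((c1 : ZMod c2)⁻¹).val : ℤ) ^ 2 : ℤ) : ZMod c2)
      = (n : ZMod c2) * ((c1 : ZMod c2)⁻¹) ^ 2 := by
    push_cast [ZMod.natCast_val, ZMod.cast_id]
    rfl
  rw [hb2, hb1]
  have hc2inv : (c2 : ZMod c1) * (c2 : ZMod c1)⁻¹ = 1 := ZMod.coe_mul_inv_eq_one c2 hcop.symm
  have hc1inv : (c1 : ZMod c2) * (c1 : ZMod c2)⁻¹ = 1 := ZMod.coe_mul_inv_eq_one c1 hcop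
  congr 1
  · congr 1
    linear_combination (-((m : ZMod c1) * (u1 : ZMod c1))) * hc2inv
  · congr 1
    linear_combination (-((m : ZMod c2) * (u2 : ZMod c2))) * hc1inv
end
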